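/- arXiv:2204.13757 — 2 statements merged into one kernel-verified Lean document; each statement's English description precedes it below -/
import Mathlib

section
/- In the DEI network creation game with α ≥ 1, the star S_n and the double star DS_n are pairwise stable; with α ≥ 4/3, the double star with switched centers (blue center adjacent to all red non-center agents and vice versa) is pairwise stable. -/
open SimpleGraph ENNReal

/-- Number of neighbors (degree) of `u` in `G`. -/
noncomputable def deg {V : Type*} (G : SimpleGraph V) (u : V) : ℕ :=
  Nat.card {v // G.Adj u v}

/-- Number of same-type ("friend") neighbors of `u`. -/
noncomputable def fr {V ι : Type*} (G : SimpleGraph V) (t : V → ι) (u : V) : ℕ :=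
  Nat.card {v // G.Adj u v ∧ t v = t u}

/-- Number of different-type neighbors of `u`. -/
noncomputable def en {V ι : Type*} (G : SimpleGraph V) (t : V → ι) (u : V) : ℕ :=
  Nat.card {v // G.Adj u v ∧ t v ≠ t u}

/-- Distance cost: sum of (extended) graph distances from `u` to all agents;
it is infinite iff some agent is unreachable from `u`. -/
noncomputable def distCost {V : Type*} [Fintype V] (G : SimpleGraph V) (u : V) : ℝ≥0∞ :=
  ∑ v, (G.edist u v : ℝ≥0∞)

/-- The graph obtained from `G` by adding the edge `uv`. -/
def addE {V : Type*} (G : SimpleGraph V) (u v : V) : SimpleGraph V :=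
  G ⊔ fromEdgeSet {s(u, v)}

/-- The graph obtained from `G` by deleting the edge `uv`. -/
def delE {V : Type*} (G : SimpleGraph V) (u v : V) : SimpleGraph V :=
  G.deleteEdges {s(u, v)}

/-- Pairwise stability (Jackson–Wolinsky) for a given cost function:
no agent benefits from unilaterally severing an incident edge, and for every
non-edge at least one endpoint does not strictly benefit from creating it. -/
def PairwiseStable {V : Type*} (cost : SimpleGraph V → V → ℝ≥0∞) (G : SimpleGraph V) : Prop :=
  (∀ u v, G.Adj u v → cost G u ≤ cost (delE G u v) u) ∧
  (∀ u v, u ≠ v → ¬ G.Adj u v →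
    cost G u ≤ cost (addE G u v) u ∨ cost G v ≤ cost (addE G u v) v)

/-- DEI neighborhood cost: `α · (deg(u) + Σ_{k=1}^{en(u)} 1/k)`. -/
noncomputable def deiN {V ι : Type*} (α : ℝ) (G : SimpleGraph V) (t : V → ι) (u : V) : ℝ :=
  α * ((deg G u : ℝ) + ∑ k ∈ Finset.range (en G t u), (1 : ℝ) / (k + 1))

/-- Total DEI cost: neighborhood cost plus distance cost. -/
noncomputable def deiCost {V ι : Type*} [Fintype V] (α : ℝ) (G : SimpleGraph V)
    (t : V → ι) (u : V) : ℝ≥0∞ :=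
  ENNReal.ofReal (deiN α G t u) + distCost G u

/-- The star with center `c`: `c` is adjacent to every other vertex. -/
def starG {V : Type*} (c : V) : SimpleGraph V :=
  fromRel (fun u _ => u = c)

/-- The double star: the blue center `cB` is adjacent to all blue agents,
the red center `cR` is adjacent to all red agents, and `cB` and `cR` are adjacent.
(Blue = `false`, red = `true`.) -/
def doubleStar {V : Type*} (t : V → Bool) (cB cR : V) : SimpleGraph V :=
  fromRel (fun u v => (u = cB ∧ t v = false) ∨ (u = cR ∧ t v = true) ∨ (u = cB ∧ v = cR))

/-- The double star with switched centers: the blue center `cB` is adjacent to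
all red agents and to `cR`, and the red center `cR` is adjacent to all blue agents.
(Blue = `false`, red = `true`.) -/
def switchedDoubleStar {V : Type*} (t : V → Bool) (cB cR : V) : SimpleGraph V :=
  fromRel (fun u v => (u = cB ∧ t v = true) ∨ (u = cR ∧ t v = false))

/-!
All three graphs are instances of `doubleStar s a b`: adjacent centers `a` and `b` (equal for the
star), every other vertex attached to `a` or `b` according to `s` (its colour for `DS_n`, the
opposite colour for the switched double star, a constant for the star). These are trees, so
deleting an edge disconnects its endpoints and makes the distance cost infinite.

A shortest walk from `u` in `G + uv` uses the new edge only as its first step, so linking `u` to `v`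
lowers `d(u, w)` only where `d(u, w) > d(v, w) + 1`. When `u` is a center, or both `u` and `v` are
leaves, this happens only for `w = v`, and the saving is `d(u, v) - 1`. That is `1` unless `u` and
`v` are leaves on different centers, and the extra degree pays for it once `α ≥ 1`. Otherwise the
saving is `2`, against `α (1 + 1 / (e + 1))` for a leaf with `e` cross-type neighbors:
`e = 0` in `DS_n`, giving `α ≥ 1`, and `e = 1` in the switched double star, giving `α ≥ 4/3`.
-/

namespace SimpleGraph

variable {V : Type*} {G : SimpleGraph V} {u v w x : V}

lemma one_le_edist (h : u ≠ v) : 1 ≤ G.edist u v :=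
  Order.one_le_iff_pos.mpr (edist_pos_of_ne h)

lemma two_le_edist (h : u ≠ v) (hadj : ¬G.Adj u v) : 2 ≤ G.edist u v := by
  rw [← one_add_one_eq_two]
  refine Order.add_one_le_of_lt (lt_of_not_ge fun h1 => ?_)
  exact (edist_le_one_iff_adj_or_eq.mp h1).elim hadj h

lemma Adj.edist_le_edist_add_one (h : G.Adj u x) (w : V) : G.edist u w ≤ G.edist x w + 1 :=
  calc G.edist u w ≤ G.edist u x + G.edist x w := SimpleGraph.edist_triangle
    _ = G.edist x w + 1 := by rw [edist_eq_one_iff_adj.mpr h, add_comm]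

lemma edist_le_length_of_notMem_support (p : (G ⊔ edge u v).Walk x w) (hu : u ∉ p.support) :
    G.edist x w ≤ p.length := by
  have hG : ∀ e ∈ p.edges, e ∈ G.edgeSet := fun e he => by
    have he' := p.edges_subset_edgeSet he
    rw [edgeSet_sup, edgeSet_edge] at he'
    refine he'.resolve_right fun hnew => hu ?_
    rw [Set.mem_singleton_iff.mp hnew.1] at he
    exact p.fst_mem_support_of_mem_edges he
  simpa [Walk.length_transfer] using (p.transfer G hG).edist_le

/-- A shortest walk in `G ⊔ edge u v` leaving `u` uses the new edge at most as its first step. -/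
lemma min_edist_le_edist_sup_edge (u v w : V) :
    min (G.edist u w) (G.edist v w + 1) ≤ (G ⊔ edge u v).edist u w := by
  classical
  by_cases hr : (G ⊔ edge u v).Reachable u w
  swap
  · rw [edist_eq_top_of_not_reachable hr]; exact le_top
  obtain ⟨p, hp⟩ := hr.exists_walk_length_eq_edist
  rw [← hp]
  refine le_trans ?_ (Nat.cast_le.mpr p.length_bypass_le_length)
  have hpath := p.bypass_isPath
  generalize p.bypass = q at hpath
  cases q with
  | nil => simp
  | @cons _ y _ h r =>
    rw [Walk.cons_isPath_iff] at hpath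
    have hr := edist_le_length_of_notMem_support r hpath.2
    rw [Walk.length_cons, Nat.cast_add, Nat.cast_one]
    rcases h with h | h
    · exact min_le_of_left_le <| (h.edist_le_edist_add_one w).trans (by gcongr)
    · obtain rfl : y = v := by grind
      exact min_le_of_right_le (by gcongr)

lemma not_reachable_of_forall_adj_mem {S : Set V} (hS : ∀ x y, G.Adj x y → x ∈ S → y ∈ S)
    (hu : u ∈ S) (hv : v ∉ S) : ¬G.Reachable u v := by
  rw [reachable_iff_reflTransGen]
  intro h
  induction h with
  | refl => exact hv hu
  | tail _ hxy ih => exact ih fun hx => hv (hS _ _ hxy hx)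

lemma not_reachable_deleteEdges_of_forall_adj_eq (huv : u ≠ v) (h : ∀ w, G.Adj u w → w = v) :
    ¬(G.deleteEdges {s(u, v)}).Reachable u v := by
  refine not_reachable_of_neighborSet_left_eq_empty huv
    (Set.eq_empty_of_forall_notMem fun w hw => ?_)
  rw [mem_neighborSet, deleteEdges_adj] at hw
  exact hw.2 (by rw [h w hw.1]; rfl)

end SimpleGraph

section Cost

variable {V ι : Type*} {G : SimpleGraph V} {t : V → ι} {u v : V}

lemma addE_eq_sup_edge (G : SimpleGraph V) (u v : V) : addE G u v = G ⊔ edge u v := rfl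

lemma addE_comm (G : SimpleGraph V) (u v : V) : addE G u v = addE G v u := by
  rw [addE_eq_sup_edge, addE_eq_sup_edge, edge_comm]

lemma neighborSet_addE (huv : u ≠ v) :
    (addE G u v).neighborSet u = insert v (G.neighborSet u) := by
  ext w
  simp only [addE_eq_sup_edge, mem_neighborSet, sup_adj, edge_adj, Set.mem_insert_iff]
  grind

lemma deg_eq_ncard (G : SimpleGraph V) (u : V) : deg G u = (G.neighborSet u).ncard :=
  Nat.card_coe_set_eq _

lemma en_eq_ncard (G : SimpleGraph V) (t : V → ι) (u : V) :
    en G t u = (G.neighborSet u ∩ {w | t w ≠ t u}).ncard :=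
  Nat.card_coe_set_eq _

lemma deg_addE [Finite V] (huv : u ≠ v) (hadj : ¬G.Adj u v) :
    deg (addE G u v) u = deg G u + 1 := by
  rw [deg_eq_ncard, deg_eq_ncard, neighborSet_addE huv,
    Set.ncard_insert_of_notMem (show v ∉ G.neighborSet u from hadj)]

lemma en_addE [Finite V] [DecidableEq ι] (huv : u ≠ v) (hadj : ¬G.Adj u v) :
    en (addE G u v) t u = en G t u + if t v = t u then 0 else 1 := by
  rw [en_eq_ncard, en_eq_ncard, neighborSet_addE huv]
  split_ifs with htv
  · rw [Set.insert_inter_of_notMem (by simpa using htv), add_zero]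
  · rw [Set.insert_inter_of_mem htv, Set.ncard_insert_of_notMem fun h => hadj h.1]

lemma en_eq_of_neighborSet_eq_singleton [DecidableEq ι] {x : V} (h : G.neighborSet u = {x}) :
    en G t u = if t x = t u then 0 else 1 := by
  rw [en_eq_ncard, h]
  split_ifs with htx
  · simp [htx]
  · rw [Set.singleton_inter_of_mem htx, Set.ncard_singleton]

/-- What linking to a new neighbor `v` adds to `u`'s neighborhood cost, see `deiN_addE`. -/
noncomputable def linkCost [DecidableEq ι] (α : ℝ) (G : SimpleGraph V) (t : V → ι)
    (u v : V) : ℝ :=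
  α * (1 + if t v = t u then 0 else 1 / ((en G t u : ℝ) + 1))

lemma deiN_addE [Finite V] [DecidableEq ι] (α : ℝ) (huv : u ≠ v) (hadj : ¬G.Adj u v) :
    deiN α (addE G u v) t u = deiN α G t u + linkCost α G t u v := by
  rw [deiN, deiN, linkCost, deg_addE huv hadj, en_addE huv hadj]
  split_ifs
  · rw [add_zero]; push_cast; ring
  · rw [Finset.sum_range_succ]; push_cast; ring

lemma one_le_linkCost [DecidableEq ι] {α : ℝ} (hα : 1 ≤ α) : 1 ≤ linkCost α G t u v := by
  have : 0 ≤ if t v = t u then (0 : ℝ) else 1 / ((en G t u : ℝ) + 1) := by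
    split_ifs <;> positivity
  rw [linkCost]
  nlinarith

lemma deiN_nonneg {α : ℝ} (hα : 0 ≤ α) : 0 ≤ deiN α G t u := by
  unfold deiN
  positivity

end Cost

section Stability

variable {V ι : Type*} [Fintype V] {G : SimpleGraph V} {t : V → ι} {u v : V} {α : ℝ}

lemma distCost_le_distCost_addE_add (g : ℕ) (huv : u ≠ v) (hg : G.edist u v ≤ g + 1)
    (hw : ∀ w ≠ v, G.edist u w ≤ G.edist v w + 1) :
    distCost G u ≤ distCost (addE G u v) u + g := by
  classical
  have hv : G.edist u v ≤ (addE G u v).edist u v + g :=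
    hg.trans (by rw [add_comm]; gcongr; exact one_le_edist huv)
  have hrest : ∀ w ∈ Finset.univ.erase v, G.edist u w ≤ (addE G u v).edist u w :=
    fun w hw' => (le_min le_rfl (hw w (Finset.ne_of_mem_erase hw'))).trans
      (min_edist_le_edist_sup_edge u v w)
  unfold distCost
  rw [← Finset.add_sum_erase _ _ (Finset.mem_univ v),
    ← Finset.add_sum_erase _ _ (Finset.mem_univ v)]
  calc _ ≤ (((addE G u v).edist u v + g : ℕ∞) : ℝ≥0∞) +
        ∑ w ∈ Finset.univ.erase v, ((addE G u v).edist u w : ℝ≥0∞) :=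
        add_le_add (ENat.toENNReal_le.mpr hv)
          (Finset.sum_le_sum fun w hw' => ENat.toENNReal_le.mpr (hrest w hw'))
    _ = _ := by push_cast; ring

lemma deiCost_le_deiCost_addE [DecidableEq ι] (hα : 0 ≤ α) (g : ℕ) (huv : u ≠ v)
    (hadj : ¬G.Adj u v) (hg : G.edist u v ≤ g + 1)
    (hw : ∀ w ≠ v, G.edist u w ≤ G.edist v w + 1)
    (hgain : g ≤ linkCost α G t u v) :
    deiCost α G t u ≤ deiCost α (addE G u v) t u := by
  unfold deiCost
  rw [deiN_addE α huv hadj]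
  calc ENNReal.ofReal (deiN α G t u) + distCost G u
      ≤ ENNReal.ofReal (deiN α G t u) + (distCost (addE G u v) u + g) := by
        gcongr; exact distCost_le_distCost_addE_add g huv hg hw
    _ = ENNReal.ofReal (deiN α G t u + g) + distCost (addE G u v) u := by
        rw [ENNReal.ofReal_add (deiN_nonneg hα) (Nat.cast_nonneg g), ENNReal.ofReal_natCast]; ring
    _ ≤ _ := by gcongr

lemma deiCost_le_deiCost_addE_of_edist_le_two [DecidableEq ι] (hα : 1 ≤ α) (huv : u ≠ v)
    (hadj : ¬G.Adj u v) (h2 : ∀ w, G.edist u w ≤ 2) :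
    deiCost α G t u ≤ deiCost α (addE G u v) t u := by
  refine deiCost_le_deiCost_addE (by linarith) 1 huv hadj (h2 v) (fun w hwv => ?_)
    (by exact_mod_cast one_le_linkCost hα)
  calc G.edist u w ≤ 1 + 1 := h2 w
    _ ≤ G.edist v w + 1 := by gcongr; exact one_le_edist hwv.symm

lemma deiCost_eq_top_of_not_reachable (h : ¬G.Reachable u v) : deiCost α G t u = ⊤ := by
  rw [deiCost, distCost, ENNReal.add_eq_top]
  exact .inr <| ENNReal.sum_eq_top.mpr ⟨v, Finset.mem_univ v, by
    simp [edist_eq_top_of_not_reachable h]⟩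

lemma deiCost_le_deiCost_delE_of_isAcyclic (hG : G.IsAcyclic) (h : G.Adj u v) :
    deiCost α G t u ≤ deiCost α (delE G u v) t u := by
  rw [delE, deiCost_eq_top_of_not_reachable
    (isBridge_iff.mp (isAcyclic_iff_forall_adj_isBridge.mp hG h))]
  exact le_top

end Stability

section DoubleStar

variable {V : Type*} {s : V → Bool} {a b x y : V}

def hub (s : V → Bool) (a b x : V) : V := bif s x then b else a

lemma hub_eq_or : hub s a b x = a ∨ hub s a b x = b := by
  unfold hub; cases s x <;> simp

lemma doubleStar_adj_iff_of_ne (hx : x ≠ a ∧ x ≠ b) :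
    (doubleStar s a b).Adj x y ↔ y = hub s a b x := by
  simp only [doubleStar, hub, fromRel_adj]
  cases s x <;> grind

lemma doubleStar_adj_hub (hx : x ≠ a ∧ x ≠ b) : (doubleStar s a b).Adj x (hub s a b x) :=
  (doubleStar_adj_iff_of_ne hx).mpr rfl

lemma en_doubleStar_of_ne {ι : Type*} [DecidableEq ι] {t : V → ι} (hx : x ≠ a ∧ x ≠ b) :
    en (doubleStar s a b) t x = if t (hub s a b x) = t x then 0 else 1 :=
  en_eq_of_neighborSet_eq_singleton (Set.ext fun _ => doubleStar_adj_iff_of_ne hx)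

lemma eq_of_doubleStar_adj_of_adj {w : V} (hx : x ≠ a ∧ x ≠ b)
    (hxy : (doubleStar s a b).Adj x y) (hxw : (doubleStar s a b).Adj x w) : w = y :=
  ((doubleStar_adj_iff_of_ne hx).mp hxw).trans ((doubleStar_adj_iff_of_ne hx).mp hxy).symm

lemma edist_doubleStar_le_one (hx : x = a ∨ x = b) (hy : y = a ∨ y = b) :
    (doubleStar s a b).edist x y ≤ 1 := by
  rcases eq_or_ne x y with rfl | hxy
  · simp
  · refine (edist_eq_one_iff_adj.mpr ?_).le
    simp only [doubleStar, fromRel_adj]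
    grind

lemma edist_doubleStar_le_two (hx : x = a ∨ x = b) (w : V) :
    (doubleStar s a b).edist x w ≤ 2 := by
  by_cases! hw : w = a ∨ w = b
  · exact (edist_doubleStar_le_one hx hw).trans (by norm_num)
  rw [edist_comm]
  calc (doubleStar s a b).edist w x ≤ (doubleStar s a b).edist (hub s a b w) x + 1 :=
        (doubleStar_adj_hub hw).edist_le_edist_add_one x
    _ ≤ 1 + 1 := by gcongr; exact edist_doubleStar_le_one hub_eq_or hx

lemma not_reachable_doubleStar_deleteEdges_centers (hab : a ≠ b) :
    ¬((doubleStar s a b).deleteEdges {s(a, b)}).Reachable a b := by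
  refine not_reachable_of_forall_adj_mem (S := {z | z = a ∨ (z ≠ b ∧ s z = false)})
    (fun z w hzw hz => ?_) (.inl rfl) (by simp [hab.symm])
  simp only [deleteEdges_adj, doubleStar, fromRel_adj, Set.mem_singleton_iff, Sym2.eq_iff,
    Set.mem_ofPred_eq] at hzw hz ⊢
  grind

lemma isAcyclic_doubleStar : (doubleStar s a b).IsAcyclic := by
  refine isAcyclic_iff_forall_adj_isBridge.mpr fun x y hxy => isBridge_iff.mpr ?_
  by_cases hx : x = a ∨ x = b
  · by_cases hy : y = a ∨ y = b
    · rcases hx with rfl | rfl <;> rcases hy with rfl | rfl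
      · exact absurd rfl hxy.ne
      · exact not_reachable_doubleStar_deleteEdges_centers hxy.ne
      · rw [Sym2.eq_swap, reachable_comm]
        exact not_reachable_doubleStar_deleteEdges_centers hxy.ne.symm
      · exact absurd rfl hxy.ne
    · push Not at hy
      rw [Sym2.eq_swap, reachable_comm]
      exact not_reachable_deleteEdges_of_forall_adj_eq hxy.ne.symm
        fun w hw => eq_of_doubleStar_adj_of_adj hy hxy.symm hw
  · push Not at hx
    exact not_reachable_deleteEdges_of_forall_adj_eq hxy.ne
      fun w hw => eq_of_doubleStar_adj_of_adj hx hxy hw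

end DoubleStar

section DoubleStarStability

variable {V ι : Type*} [Fintype V] [DecidableEq ι] {s : V → Bool} {a b u v : V} {α : ℝ}
  {t : V → ι}

lemma deiCost_doubleStar_le_addE_of_center (hα : 1 ≤ α) (hu : u = a ∨ u = b) (huv : u ≠ v)
    (hadj : ¬(doubleStar s a b).Adj u v) :
    deiCost α (doubleStar s a b) t u ≤ deiCost α (addE (doubleStar s a b) u v) t u :=
  deiCost_le_deiCost_addE_of_edist_le_two hα huv hadj (edist_doubleStar_le_two hu)

lemma deiCost_doubleStar_le_addE_of_leaves (hα : 1 ≤ α) (hu : u ≠ a ∧ u ≠ b)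
    (hv : v ≠ a ∧ v ≠ b) (huv : u ≠ v) (hadj : ¬(doubleStar s a b).Adj u v)
    (hcross : s u ≠ s v → 2 ≤ linkCost α (doubleStar s a b) t u v) :
    deiCost α (doubleStar s a b) t u ≤ deiCost α (addE (doubleStar s a b) u v) t u := by
  set G := doubleStar s a b
  have hviaHub : ∀ w, G.edist u w ≤ G.edist (hub s a b u) w + 1 :=
    (doubleStar_adj_hub hu).edist_le_edist_add_one
  have hw : ∀ w ≠ v, G.edist u w ≤ G.edist v w + 1 := by
    intro w hwv
    by_cases hwh : w = hub s a b v
    · calc G.edist u w ≤ 1 + 1 := (hviaHub w).trans (by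
            gcongr; exact edist_doubleStar_le_one hub_eq_or (hwh ▸ hub_eq_or))
        _ ≤ G.edist v w + 1 := by gcongr; exact one_le_edist hwv.symm
    · calc G.edist u w ≤ 2 + 1 := (hviaHub w).trans (by
            gcongr; exact edist_doubleStar_le_two hub_eq_or w)
        _ ≤ G.edist v w + 1 := by
          gcongr
          exact two_le_edist hwv.symm (by rwa [doubleStar_adj_iff_of_ne hv])
  by_cases hs : s u = s v
  · have hhub : hub s a b u = hub s a b v := by simp only [hub, hs]
    refine deiCost_le_deiCost_addE (by linarith) 1 huv hadj ((hviaHub v).trans ?_) hw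
      (by exact_mod_cast one_le_linkCost hα)
    rw [hhub, edist_comm, edist_eq_one_iff_adj.mpr (doubleStar_adj_hub hv), Nat.cast_one]
  · refine deiCost_le_deiCost_addE (by linarith) 2 huv hadj ((hviaHub v).trans ?_) hw
      (by exact_mod_cast hcross hs)
    gcongr
    exact edist_doubleStar_le_two hub_eq_or v

-- For `a = b` this is the star; `2` is the distance saved by linking leaves on different centers.
theorem pairwiseStable_doubleStar (hα : 1 ≤ α)
    (hcross : ∀ u v, u ≠ a ∧ u ≠ b → v ≠ a ∧ v ≠ b → s u ≠ s v →
      2 ≤ linkCost α (doubleStar s a b) t u v) :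
    PairwiseStable (fun G => deiCost α G t) (doubleStar s a b) := by
  refine ⟨fun u v huv => deiCost_le_deiCost_delE_of_isAcyclic isAcyclic_doubleStar huv,
    fun u v huv hadj => ?_⟩
  by_cases hu : u = a ∨ u = b
  · exact .inl (deiCost_doubleStar_le_addE_of_center hα hu huv hadj)
  by_cases hv : v = a ∨ v = b
  · refine .inr ?_
    rw [addE_comm]
    exact deiCost_doubleStar_le_addE_of_center hα hv huv.symm fun h => hadj h.symm
  push Not at hu hv
  exact .inl (deiCost_doubleStar_le_addE_of_leaves hα hu hv huv hadj (hcross u v hu hv))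

end DoubleStarStability

lemma starG_eq_doubleStar {V : Type*} (c : V) : starG c = doubleStar (fun _ => false) c c := by
  ext x y
  simp only [starG, doubleStar, fromRel_adj]
  grind

lemma switchedDoubleStar_eq_doubleStar {V : Type*} {t : V → Bool} {cB cR : V}
    (hcR : t cR = true) :
    switchedDoubleStar t cB cR = doubleStar (fun x => !t x) cB cR := by
  ext x y
  simp only [switchedDoubleStar, doubleStar, fromRel_adj, Bool.not_eq_eq_eq_not, Bool.not_false,
    Bool.not_true]
  grind

theorem dei_stars_stable_general {V : Type*} [Fintype V] (α : ℝ) (t : V → Bool)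
    (c cB cR : V) (hcB : t cB = false) (hcR : t cR = true) :
    (1 ≤ α →
      PairwiseStable (fun G' => deiCost α G' t) (starG c) ∧
      PairwiseStable (fun G' => deiCost α G' t) (doubleStar t cB cR)) ∧
    (4 / 3 ≤ α →
      PairwiseStable (fun G' => deiCost α G' t) (switchedDoubleStar t cB cR)) := by
  refine ⟨fun hα => ⟨?_, ?_⟩, fun hα => ?_⟩
  · rw [starG_eq_doubleStar]
    exact pairwiseStable_doubleStar hα fun u v _ _ h => absurd rfl h
  · refine pairwiseStable_doubleStar hα fun u v hu _ htuv => ?_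
    -- a leaf's hub has its colour, so its first cross-colour link costs `α * (1 + 1)`
    have hsame : t (hub t cB cR u) = t u := by cases h : t u <;> simp [hub, h, hcB, hcR]
    rw [linkCost, if_neg (Ne.symm htuv), en_doubleStar_of_ne hu, if_pos hsame]
    norm_num
    linarith
  · rw [switchedDoubleStar_eq_doubleStar hcR]
    refine pairwiseStable_doubleStar (by linarith) fun u v hu _ hs => ?_
    -- a leaf's hub has the other colour, so its second cross-colour link costs `α * (1 + 1/2)`
    have hother : t (hub (fun x => !t x) cB cR u) ≠ t u := by
      cases h : t u <;> simp [hub, h, hcB, hcR]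
    have htuv : t v ≠ t u := fun h => hs (by rw [h])
    rw [linkCost, if_neg htuv, en_doubleStar_of_ne hu, if_neg hother]
    norm_num
    linarith

/-- DEI game: for `α ≥ 1` the star and the double star are pairwise stable;
for `α ≥ 4/3` the double star with switched centers is pairwise stable. -/
theorem dei_stars_stable {V : Type*} [Fintype V] (α : ℝ) (t : V → Bool)
    (hα0 : 0 < α) (c cB cR : V) (hcB : t cB = false) (hcR : t cR = true) :
    (1 ≤ α →
      PairwiseStable (fun G' => deiCost α G' t) (starG c) ∧
      PairwiseStable (fun G' => deiCost α G' t) (doubleStar t cB cR)) ∧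
    (4 / 3 ≤ α →
      PairwiseStable (fun G' => deiCost α G' t) (switchedDoubleStar t cB cR)) :=
  dei_stars_stable_general α t c cB cR hcB hcR
end

section
/- In the DEI game with two types, any fully intra-connected pairwise stable network G satisfies: if α > n_B/(n_B + 1) then every red (majority-type) agent has at most one bichromatic edge; if α > n_R/(n_R + 1) then every agent has at most one bichromatic edge. -/
open SimpleGraph ENNReal

private lemma edist_two' {V : Type*} (H : SimpleGraph V) {a b c : V} (hab : H.Adj a b)
    (hbc : H.Adj b c) (hac : ¬ H.Adj a c) (hne : a ≠ c) : H.edist a c = 2 := by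
  apply le_antisymm
  · simpa using SimpleGraph.edist_le (Walk.cons hab (Walk.cons hbc Walk.nil))
  · have h0 : H.edist a c ≠ 0 := by simp [SimpleGraph.edist_eq_zero_iff, hne]
    have h1 : H.edist a c ≠ 1 := fun h => hac (SimpleGraph.edist_eq_one_iff_adj.mp h)
    have : 1 < H.edist a c :=
      lt_of_le_of_ne (Order.one_le_iff_pos.mpr (pos_iff_ne_zero.mpr h0)) (Ne.symm h1)
    exact Order.add_one_le_of_lt this

private lemma delE_adj' {V : Type*} (G : SimpleGraph V) (u v : V) {a : V} :
    (delE G u v).Adj u a ↔ G.Adj u a ∧ a ≠ v := by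
  simp only [delE, SimpleGraph.deleteEdges_adj, Set.mem_singleton_iff, Sym2.congr_right]

private lemma deg_set {V : Type*} (G : SimpleGraph V) (u : V) :
    deg G u = ({x | G.Adj u x} : Set V).ncard := by
  rw [deg, ← Nat.card_coe_set_eq]; rfl

private lemma en_set {V ι : Type*} (G : SimpleGraph V) (t : V → ι) (u : V) :
    en G t u = ({x | G.Adj u x ∧ t x ≠ t u} : Set V).ncard := by
  rw [en, ← Nat.card_coe_set_eq]; rfl

set_option maxHeartbeats 2000000 in
private lemma dei_key {V : Type*} [Fintype V] (α : ℝ) (hα : 0 ≤ α) (t : V → Bool)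
    (G : SimpleGraph V)
    (hintra : ∀ u v : V, u ≠ v → t u = t v → G.Adj u v)
    (hG : PairwiseStable (fun G' => deiCost α G' t) G)
    (u : V) (h2 : 2 ≤ en G t u) :
    α * (1 + 1 / (en G t u : ℝ)) ≤ 1 := by
  classical
  set S : Set V := {x | G.Adj u x ∧ t x ≠ t u} with hS
  have heS : en G t u = S.ncard := en_set G t u
  have hcard : 1 < S.ncard := by omega
  obtain ⟨v, w, hvS, hwS, hvw⟩ := (Set.one_lt_ncard_iff (Set.toFinite S)).mp hcard
  have hadjv : G.Adj u v := hvS.1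
  have htv : t v ≠ t u := hvS.2
  have hadjw : G.Adj u w := hwS.1
  have htw : t w ≠ t u := hwS.2
  set G' := delE G u v with hG'
  have hadj' : ∀ a, G'.Adj u a ↔ G.Adj u a ∧ a ≠ v := fun a => delE_adj' G u v
  -- degree and en computation
  have hsetdeg : {x | G'.Adj u x} = ({x | G.Adj u x} : Set V) \ {v} := by
    ext x; simp only [Set.mem_setOf_eq, Set.mem_diff, Set.mem_singleton_iff, hadj' x]
  have hseten : {x | G'.Adj u x ∧ t x ≠ t u} = S \ {v} := by
    ext x
    simp only [hS, Set.mem_setOf_eq, Set.mem_diff, Set.mem_singleton_iff, hadj' x]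
    tauto
  have hdeg : deg G u = deg G' u + 1 := by
    rw [deg_set, deg_set, hsetdeg]
    exact (Set.ncard_diff_singleton_add_one hadjv (Set.toFinite _)).symm
  have hen : en G t u = en G' t u + 1 := by
    rw [heS, en_set, hseten]
    exact (Set.ncard_diff_singleton_add_one hvS (Set.toFinite _)).symm
  -- type facts
  have hwv : w ≠ v := hvw.symm
  have htwv : t w = t v := by
    cases hb : t w <;> cases hc : t v <;> cases hu : t u <;> simp_all
  -- edist facts in G : every vertex within distance 2
  have hle2 : ∀ x, G.edist u x ≤ 2 := by
    intro x
    by_cases hx : x = u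
    · simp [hx, SimpleGraph.edist_self]
    by_cases hadj : G.Adj u x
    · rw [SimpleGraph.edist_eq_one_iff_adj.mpr hadj]; norm_num
    · have htx : t x ≠ t u := fun h => hadj (hintra u x (Ne.symm hx) h.symm)
      have hwx : w ≠ x := fun h => hadj (h ▸ hadjw)
      have htwx : t w = t x := by
        cases hb : t w <;> cases hc : t x <;> cases hu : t u <;> simp_all
      have : G.edist u x = 2 :=
        edist_two' G hadjw (hintra w x hwx htwx) hadj (Ne.symm hx)
      rw [this]
  -- edist in G' equals edist in G away from v, and shifts by one at v
  have hedv : G.edist u v = 1 := SimpleGraph.edist_eq_one_iff_adj.mpr hadjv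
  have hG'uw : G'.Adj u w := (hadj' w).mpr ⟨hadjw, hwv⟩
  have hedv' : G'.edist u v = 2 := by
    apply edist_two' G' hG'uw
    · show G'.Adj w v
      simp only [hG', delE, SimpleGraph.deleteEdges_adj, Set.mem_singleton_iff]
      refine ⟨hintra w v hwv htwv, ?_⟩
      intro h
      rcases Sym2.eq_iff.mp h with ⟨h1, -⟩ | ⟨h1, -⟩
      · exact hadjw.ne' h1
      · exact hwv h1
    · simp [hadj' v]
    · exact hadjv.ne
  have hedother : ∀ x, x ≠ v → G'.edist u x = G.edist u x := by
    intro x hxv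
    by_cases hx : x = u
    · simp [hx, SimpleGraph.edist_self]
    by_cases hadj : G.Adj u x
    · have h' : G'.Adj u x := (hadj' x).mpr ⟨hadj, hxv⟩
      rw [SimpleGraph.edist_eq_one_iff_adj.mpr h', SimpleGraph.edist_eq_one_iff_adj.mpr hadj]
    · have htx : t x ≠ t u := fun h => hadj (hintra u x (Ne.symm hx) h.symm)
      have hwx : w ≠ x := fun h => hadj (h ▸ hadjw)
      have htwx : t w = t x := by
        cases hb : t w <;> cases hc : t x <;> cases hu : t u <;> simp_all
      have hGwx : G.Adj w x := hintra w x hwx htwx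
      have hG'wx : G'.Adj w x := by
        simp only [hG', delE, SimpleGraph.deleteEdges_adj, Set.mem_singleton_iff]
        refine ⟨hGwx, ?_⟩
        intro h
        rcases Sym2.eq_iff.mp h with ⟨h1, -⟩ | ⟨-, h2⟩
        · exact hadjw.ne' h1
        · exact hx h2
      have hG'nadj : ¬ G'.Adj u x := fun h => hadj ((hadj' x).mp h).1
      rw [edist_two' G' hG'uw hG'wx hG'nadj (Ne.symm hx),
          edist_two' G hadjw hGwx hadj (Ne.symm hx)]
  have hDsum : (∑ x, (G'.edist u x : ℝ≥0∞)) = (∑ x, (G.edist u x : ℝ≥0∞)) + 1 := by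
    rw [← Finset.sum_erase_add _ _ (Finset.mem_univ v),
        ← Finset.sum_erase_add (f := fun x => (G.edist u x : ℝ≥0∞)) _ (Finset.mem_univ v)]
    rw [Finset.sum_congr rfl (fun x hx => by
      rw [hedother x (Finset.ne_of_mem_erase hx)])]
    rw [hedv, hedv']
    push_cast
    ring
  have hfin : (∑ x, (G.edist u x : ℝ≥0∞)) ≠ ⊤ := by
    refine (ENNReal.sum_lt_top.mpr ?_).ne
    intro x _
    refine lt_of_le_of_lt (show (G.edist u x : ℝ≥0∞) ≤ ((2 : ℕ∞) : ℝ≥0∞) from ?_) ?_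
    · exact_mod_cast hle2 x
    · simp
  have hNsplit : α * ((deg G u : ℝ) + ∑ k ∈ Finset.range (en G t u), (1:ℝ)/(k+1))
      = α * ((deg G' u : ℝ) + ∑ k ∈ Finset.range (en G' t u), (1:ℝ)/(k+1))
        + α * (1 + 1/(en G t u : ℝ)) := by
    rw [hen, hdeg, Finset.sum_range_succ]
    generalize en G' t u = m
    generalize deg G' u = d
    push_cast
    ring
  have hN'0 : 0 ≤ α * ((deg G' u : ℝ) + ∑ k ∈ Finset.range (en G' t u), (1:ℝ)/(k+1)) :=
    mul_nonneg hα (by positivity)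
  have hc0 : 0 ≤ α * (1 + 1/(en G t u : ℝ)) := mul_nonneg hα (by positivity)
  have hst := hG.1 u v hadjv
  simp only [deiCost, deiN, distCost] at hst
  rw [← hG'] at hst
  rw [hNsplit, ENNReal.ofReal_add hN'0 hc0, hDsum] at hst
  rw [add_assoc, ENNReal.add_le_add_iff_left ENNReal.ofReal_ne_top] at hst
  rw [add_comm (ENNReal.ofReal (α * (1 + 1/(en G t u : ℝ)))) _,
     ENNReal.add_le_add_iff_left hfin] at hst
  exact ENNReal.ofReal_le_one.mp hst


private lemma dei_arith (α : ℝ) (e n : ℕ) (h2 : 2 ≤ e) (hen : e ≤ n)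
    (hαn : (n : ℝ) / ((n : ℝ) + 1) < α) (hkey : α * (1 + 1 / (e : ℝ)) ≤ 1) : False := by
  have he2 : (2 : ℝ) ≤ e := by exact_mod_cast h2
  have he : (0 : ℝ) < e := by linarith
  have hn1 : (0 : ℝ) < (n : ℝ) + 1 := by positivity
  have h1 : α * ((e : ℝ) + 1) ≤ e := by
    have hmul := mul_le_mul_of_nonneg_right hkey he.le
    have hq : α * (1 + 1 / (e : ℝ)) * e = α * ((e : ℝ) + 1) := by
      field_simp
    rw [hq, one_mul] at hmul
    exact hmul
  have h2' : (n : ℝ) < α * ((n : ℝ) + 1) := by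
    rw [div_lt_iff₀ hn1] at hαn
    linarith
  have hne : (e : ℝ) ≤ n := by exact_mod_cast hen
  nlinarith [mul_le_mul_of_nonneg_right h1 hn1.le,
    mul_lt_mul_of_pos_right h2' (by linarith : (0 : ℝ) < (e : ℝ) + 1)]

private lemma en_le_card {V : Type*} [Fintype V] (G : SimpleGraph V) (t : V → Bool) (u : V)
    (b : Bool) (hu : t u = b) : en G t u ≤ Nat.card {v : V // t v = !b} := by
  have h1 : Nat.card {v : V // t v = !b} = ({v : V | t v = !b}).ncard := by
    rw [← Nat.card_coe_set_eq]; rfl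
  rw [en_set, h1]
  apply Set.ncard_le_ncard _ (Set.toFinite _)
  intro x hx
  have := hx.2
  rw [hu] at this
  simp only [Set.mem_setOf_eq]
  cases b <;> simp_all

/-- DEI game with two types (blue = `false` minority, red = `true` majority):
in a fully intra-connected pairwise stable network, if `α > n_B/(n_B+1)` then
every red agent has at most one bichromatic edge; if `α > n_R/(n_R+1)` then
every agent has at most one bichromatic edge. -/
theorem dei_few_bichromatic {V : Type*} [Fintype V] (α : ℝ) (t : V → Bool)
    (nB nR : ℕ)
    (hB : nB = Nat.card {v : V // t v = false})
    (hR : nR = Nat.card {v : V // t v = true})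
    (hBR : nB ≤ nR)
    (G : SimpleGraph V)
    (hintra : ∀ u v : V, u ≠ v → t u = t v → G.Adj u v)
    (hG : PairwiseStable (fun G' => deiCost α G' t) G) :
    ((nB : ℝ) / ((nB : ℝ) + 1) < α → ∀ u : V, t u = true → en G t u ≤ 1) ∧
    ((nR : ℝ) / ((nR : ℝ) + 1) < α → ∀ u : V, en G t u ≤ 1) := by
  have hbound : ∀ u : V, (t u = true → en G t u ≤ nB) ∧ en G t u ≤ nR := by
    intro u
    cases hu : t u with
    | false =>
      have h := en_le_card G t u false hu
      simp only [Bool.not_false] at h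
      rw [← hR] at h
      exact ⟨fun h' => absurd h' (by simp), h⟩
    | true =>
      have h := en_le_card G t u true hu
      simp only [Bool.not_true] at h
      rw [← hB] at h
      exact ⟨fun _ => h, le_trans h hBR⟩
  constructor
  · intro hα u hu
    by_contra hcon
    push_neg at hcon
    have h2 : 2 ≤ en G t u := hcon
    have hα0 : 0 ≤ α := le_trans (by positivity) hα.le
    exact dei_arith α (en G t u) nB h2 ((hbound u).1 hu) hα
      (dei_key α hα0 t G hintra hG u h2)
  · intro hα u
    by_contra hcon
    push_neg at hcon
    have h2 : 2 ≤ en G t u := hcon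
    have hα0 : 0 ≤ α := le_trans (by positivity) hα.le
    exact dei_arith α (en G t u) nR h2 ((hbound u).2) hα
      (dei_key α hα0 t G hintra hG u h2)
end
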